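/- Under the stated setting together with Assumption (Sym), suppose f ∈ X* is an extreme point of the closed unit ball {g ∈ X* : ‖g‖_{X_Q*} ≤ 1}, and suppose ω, γ ∈ 𝒜 satisfy Qω = Qγ = f. Then there exists c ∈ 𝕂 with |c| = 1 such that γ = c·ω; that is, the minimum norm solution of Qω = f is unique up to multiplication by a unimodular scalar. -/

import Mathlib

open NormedSpace Filter Topology

noncomputable section

/-- The setting of Coifman–Lions–Meyer–Semmes-type quadratic operators:
`X` is a real Banach space, `H` a Hilbert space over `𝕜 ∈ {ℝ, ℂ}`,
`T` is a bilinear map `X** × H → H` satisfying assumption (A1)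
(two-sided norm bounds and compactness of `T_b` for `b` in the canonical
image of `X`) and assumption (A2) (`T_b` self-adjoint with norm equal to the
supremum of `⟨T_b f, f⟩` over the unit sphere), together with the quadratic
map `Q : H → X*` determined by `⟨a, Qω⟩ = ⟨T_a ω, ω⟩` for `a ∈ X`, and its
Gâteaux derivative `Q'` determined by `⟨a, Q'_ω γ⟩ = 2 Re ⟨T_a ω, γ⟩`. -/
structure CLMS (𝕜 X H : Type*) [RCLike 𝕜]
    [NormedAddCommGroup X] [NormedSpace ℝ X] [CompleteSpace X]
    [NormedAddCommGroup H] [InnerProductSpace 𝕜 H] [CompleteSpace H] where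
  T : StrongDual ℝ (StrongDual ℝ X) → (H →L[𝕜] H)
  T_add : ∀ (b₁ b₂ : StrongDual ℝ (StrongDual ℝ X)) (ω : H), T (b₁ + b₂) ω = T b₁ ω + T b₂ ω
  T_smul : ∀ (r : ℝ) (b : StrongDual ℝ (StrongDual ℝ X)) (ω : H), T (r • b) ω = (r : 𝕜) • T b ω
  c : ℝ
  C : ℝ
  c_pos : 0 < c
  c_le_C : c ≤ C
  lower : ∀ b : StrongDual ℝ (StrongDual ℝ X), c * ‖b‖ ≤ ‖T b‖
  upper : ∀ b : StrongDual ℝ (StrongDual ℝ X), ‖T b‖ ≤ C * ‖b‖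
  compact : ∀ a : X, IsCompactOperator (T (inclusionInDoubleDual ℝ X a))
  selfAdj : ∀ b : StrongDual ℝ (StrongDual ℝ X), IsSelfAdjoint (T b)
  norm_eq : ∀ b : StrongDual ℝ (StrongDual ℝ X),
    ‖T b‖ = sSup {r : ℝ | ∃ f : H, ‖f‖ = 1 ∧ RCLike.re (inner 𝕜 ((T b) f) f : 𝕜) = r}
  Q : H → StrongDual ℝ X
  hQ : ∀ (a : X) (ω : H),
    Q ω a = RCLike.re (inner 𝕜 ((T (inclusionInDoubleDual ℝ X a)) ω) ω : 𝕜)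
  Q' : H → H → StrongDual ℝ X
  hQ' : ∀ (a : X) (ω γ : H),
    Q' ω γ a = 2 * RCLike.re (inner 𝕜 ((T (inclusionInDoubleDual ℝ X a)) ω) γ : 𝕜)

namespace CLMS

variable {𝕜 X H : Type*} [RCLike 𝕜]
    [NormedAddCommGroup X] [NormedSpace ℝ X] [CompleteSpace X]
    [NormedAddCommGroup H] [InnerProductSpace 𝕜 H] [CompleteSpace H]

/-- The equivalent norm `‖b‖_{X_Q} := ‖T_b‖` on `X`. -/
def normQ (S : CLMS 𝕜 X H) (b : X) : ℝ := ‖S.T (inclusionInDoubleDual ℝ X b)‖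

/-- The dual norm `‖f‖_{X_Q*} := sup {⟨b, f⟩ : b ∈ X, ‖b‖_{X_Q} ≤ 1}` on `X*`. -/
def dualNormQ (S : CLMS 𝕜 X H) (f : StrongDual ℝ X) : ℝ :=
  sSup {r : ℝ | ∃ b : X, S.normQ b ≤ 1 ∧ f b = r}

/-- The set `𝒜 = {ω ∈ H : ‖ω‖ = 1, ‖Qω‖_{X_Q*} = 1}`. -/
def A (S : CLMS 𝕜 X H) : Set H := {ω : H | ‖ω‖ = 1 ∧ S.dualNormQ (S.Q ω) = 1}

/-- The duality mapping `D(b) = {h ∈ X* : ‖h‖_{X_Q*} = 1, ⟨b, h⟩ = 1}`. -/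
def D (S : CLMS 𝕜 X H) (b : X) : Set (StrongDual ℝ X) :=
  {h : StrongDual ℝ X | S.dualNormQ h = 1 ∧ h b = 1}

/-- `ω` is a minimum norm solution (of `Qγ = Qω`). -/
def MinNormSol (S : CLMS 𝕜 X H) (ω : H) : Prop :=
  ∀ γ : H, S.Q γ = S.Q ω → ‖ω‖ ≤ ‖γ‖

/-- Assumption (Sym): if `ω, γ ∈ 𝒜` have `Qω = Qγ`, then `Q'_ω (c γ) ≠ 0`
for some unimodular `c ∈ 𝕜`. -/
def Sym (S : CLMS 𝕜 X H) : Prop :=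
  ∀ ω ∈ S.A, ∀ γ ∈ S.A, S.Q ω = S.Q γ → ∃ c : 𝕜, ‖c‖ = 1 ∧ S.Q' ω (c • γ) ≠ 0

/-- Assumption (A3): the canonical pairing of `b ∈ X**` with `Qω ∈ X*`
equals `⟨T_b ω, ω⟩`. -/
def A3 (S : CLMS 𝕜 X H) : Prop :=
  ∀ (b : StrongDual ℝ (StrongDual ℝ X)) (ω : H), b (S.Q ω) = RCLike.re (inner 𝕜 ((S.T b) ω) ω : 𝕜)

end CLMS

/-! For an extreme point `f` and unit vectors with `Qω = Qν = f`, the normalised images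
`Q(ω ± ν/2) / ‖ω ± ν/2‖²` lie in the unit ball and have `f` as a convex combination, which forces
`Q'_ω ν = 2 Re⟪ω, ν⟫ f`. If `|⟪ω, γ⟫| < 1`, rotate `γ` so that `⟪ω, γ⟫` is real; the normalised
component of `γ` orthogonal to `ω` is then another solution `η`, and `Q'_ω (c η) = 0` for every
unimodular `c`, contradicting (Sym). Hence `|⟪ω, γ⟫| = 1`, the equality case of Cauchy–Schwarz. -/

section Extreme

variable {𝕜 E : Type*} [Field 𝕜] [LinearOrder 𝕜] [IsStrictOrderedRing 𝕜]
  [AddCommGroup E] [Module 𝕜 E]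

theorem eq_smul_of_mem_extremePoints {B : Set E} {f p q : E} {s t : 𝕜}
    (hf : f ∈ B.extremePoints 𝕜) (hs : 0 < s) (ht : 0 < t) (hp : s⁻¹ • p ∈ B)
    (hq : t⁻¹ • q ∈ B) (hpq : p + q = (s + t) • f) : p = s • f := by
  have hst : 0 < s + t := add_pos hs ht
  have hseg : f ∈ openSegment 𝕜 (s⁻¹ • p) (t⁻¹ • q) := by
    refine ⟨s / (s + t), t / (s + t), by positivity, by positivity, by field_simp, ?_⟩
    rw [smul_smul, smul_smul, div_mul_eq_mul_div, div_mul_eq_mul_div, mul_inv_cancel₀ hs.ne',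
      mul_inv_cancel₀ ht.ne', one_div, ← smul_add, hpq, inv_smul_smul₀ hst.ne']
  rw [← inv_smul_eq_iff₀ hs.ne']
  exact hf.2 hp hq hseg

end Extreme

theorem exists_norm_eq_one_inner_smul_eq_norm {𝕜 E : Type*} [RCLike 𝕜] [NormedAddCommGroup E]
    [InnerProductSpace 𝕜 E] (x y : E) :
    ∃ u : 𝕜, ‖u‖ = 1 ∧ inner 𝕜 x (u • y) = (‖inner 𝕜 x y‖ : 𝕜) := by
  rcases eq_or_ne (inner 𝕜 x y) 0 with hw | hw
  · exact ⟨1, norm_one, by rw [one_smul, hw, norm_zero, RCLike.ofReal_zero]⟩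
  refine ⟨starRingEnd 𝕜 (inner 𝕜 x y) / ‖inner 𝕜 x y‖, ?_, ?_⟩
  · rw [norm_div, RCLike.norm_conj, RCLike.norm_ofReal, abs_norm, div_self (norm_ne_zero_iff.2 hw)]
  · have : (‖inner 𝕜 x y‖ : 𝕜) ≠ 0 := RCLike.ofReal_ne_zero.2 (norm_ne_zero_iff.2 hw)
    rw [inner_smul_right, div_mul_eq_mul_div, RCLike.conj_mul, sq, mul_div_assoc, div_self this,
      mul_one]

namespace CLMS

variable {𝕜 X H : Type*} [RCLike 𝕜]
    [NormedAddCommGroup X] [NormedSpace ℝ X] [CompleteSpace X]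
    [NormedAddCommGroup H] [InnerProductSpace 𝕜 H] [CompleteSpace H]
    (S : CLMS 𝕜 X H)

theorem re_inner_T_comm (b : StrongDual ℝ (StrongDual ℝ X)) (x y : H) :
    RCLike.re (inner 𝕜 (S.T b y) x) = RCLike.re (inner 𝕜 (S.T b x) y) := by
  have h : inner 𝕜 (S.T b y) x = inner 𝕜 y (S.T b x) := (S.selfAdj b).isSymmetric y x
  rw [h, ← inner_conj_symm, RCLike.conj_re]

theorem Q_add (x y : H) : S.Q (x + y) = S.Q x + S.Q' x y + S.Q y := by
  ext a
  simp only [add_apply, S.hQ, S.hQ', map_add, inner_add_left, inner_add_right,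
    S.re_inner_T_comm _ x y]
  ring

theorem Q_sub (x y : H) : S.Q (x - y) = S.Q x - S.Q' x y + S.Q y := by
  ext a
  simp only [add_apply, sub_apply, S.hQ, S.hQ', map_sub,
    inner_sub_left, inner_sub_right, S.re_inner_T_comm _ x y]
  ring

theorem Q_smul (u : 𝕜) (x : H) : S.Q (u • x) = (‖u‖ ^ 2) • S.Q x := by
  ext a
  rw [smul_apply, smul_eq_mul, S.hQ, S.hQ, map_smul, inner_smul_left,
    inner_smul_right, ← mul_assoc, RCLike.conj_mul, ← RCLike.ofReal_pow, RCLike.re_ofReal_mul]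

theorem Q_smul_of_norm_eq_one {u : 𝕜} (hu : ‖u‖ = 1) (x : H) : S.Q (u • x) = S.Q x := by
  rw [Q_smul, hu, one_pow, one_smul]

theorem Q'_self (x : H) : S.Q' x x = (2 : ℝ) • S.Q x := by
  ext a
  rw [smul_apply, smul_eq_mul, S.hQ', S.hQ]

theorem Q'_sub_right (x y z : H) : S.Q' x (y - z) = S.Q' x y - S.Q' x z := by
  ext a
  rw [sub_apply, S.hQ', S.hQ', S.hQ', inner_sub_right, map_sub, mul_sub]

theorem Q'_ofReal_smul_right (t : ℝ) (x y : H) : S.Q' x ((t : 𝕜) • y) = t • S.Q' x y := by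
  ext a
  rw [smul_apply, smul_eq_mul, S.hQ', S.hQ', inner_smul_right,
    RCLike.re_ofReal_mul, mul_left_comm]

theorem Q'_ofReal_smul_left (t : ℝ) (x y : H) : S.Q' ((t : 𝕜) • x) y = t • S.Q' x y := by
  ext a
  rw [smul_apply, smul_eq_mul, S.hQ', S.hQ', map_smul, inner_smul_left,
    RCLike.conj_ofReal, RCLike.re_ofReal_mul, mul_left_comm]

theorem Q_apply_le (x : H) (b : X) : S.Q x b ≤ S.normQ b * ‖x‖ ^ 2 := by
  rw [S.hQ, sq, ← mul_assoc]
  exact (re_inner_le_norm _ _).trans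
    (mul_le_mul_of_nonneg_right ((S.T _).le_opNorm x) (norm_nonneg x))

theorem dualNormQ_le {g : StrongDual ℝ X} {M : ℝ} (hM : 0 ≤ M)
    (h : ∀ b, S.normQ b ≤ 1 → g b ≤ M) : S.dualNormQ g ≤ M :=
  Real.sSup_le (by rintro _ ⟨b, hb, rfl⟩; exact h b hb) hM

theorem dualNormQ_inv_norm_sq_smul_Q_le_one (x : H) :
    S.dualNormQ ((‖x‖ ^ 2)⁻¹ • S.Q x) ≤ 1 := by
  refine S.dualNormQ_le zero_le_one fun b hb => ?_
  rw [smul_apply, smul_eq_mul]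
  calc (‖x‖ ^ 2)⁻¹ * S.Q x b ≤ (‖x‖ ^ 2)⁻¹ * ‖x‖ ^ 2 := by
        gcongr
        exact (S.Q_apply_le x b).trans (mul_le_of_le_one_left (by positivity) hb)
    _ ≤ 1 := inv_mul_le_one_of_le₀ le_rfl (by positivity)

variable {S} {f : StrongDual ℝ X}

theorem Q'_eq_of_mem_extremePoints
    (hf : f ∈ Set.extremePoints ℝ {g : StrongDual ℝ X | S.dualNormQ g ≤ 1})
    {ω ν : H} (hω : ‖ω‖ = 1) (hν : ‖ν‖ = 1) (hQω : S.Q ω = f) (hQν : S.Q ν = f) :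
    S.Q' ω ν = (2 * RCLike.re (inner 𝕜 ω ν)) • f := by
  set r := RCLike.re (inner 𝕜 ω ν)
  have hr : |r| ≤ 1 := by
    simpa [hω, hν] using (RCLike.abs_re_le_norm _).trans (norm_inner_le_norm (𝕜 := 𝕜) ω ν)
  set μ : H := ((2⁻¹ : ℝ) : 𝕜) • ν
  have hμ : ‖μ‖ = 2⁻¹ := by simp [μ, norm_smul, hν]
  have hQμ : S.Q μ = (4⁻¹ : ℝ) • f := by
    rw [S.Q_smul, hQν, RCLike.norm_ofReal]
    norm_num
  have hωμ : RCLike.re (inner 𝕜 ω μ) = 2⁻¹ * r := by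
    rw [inner_smul_right, RCLike.re_ofReal_mul]
  have hs : ‖ω + μ‖ ^ 2 = 5 / 4 + r := by
    rw [@norm_add_sq 𝕜, hω, hμ, hωμ]
    ring
  have ht : ‖ω - μ‖ ^ 2 = 5 / 4 - r := by
    rw [@norm_sub_sq 𝕜, hω, hμ, hωμ]
    ring
  have hQ'μ : S.Q' ω μ = (2⁻¹ : ℝ) • S.Q' ω ν := S.Q'_ofReal_smul_right _ _ _
  have key : S.Q (ω + μ) = ‖ω + μ‖ ^ 2 • f := by
    refine eq_smul_of_mem_extremePoints hf (by rw [hs]; linarith [abs_le.1 hr])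
      (by rw [ht]; linarith [abs_le.1 hr]) (S.dualNormQ_inv_norm_sq_smul_Q_le_one _)
      (S.dualNormQ_inv_norm_sq_smul_Q_le_one _) ?_
    rw [S.Q_add, S.Q_sub, hs, ht, hQω, hQμ]
    module
  rw [S.Q_add, hQω, hQμ, hQ'μ, hs] at key
  linear_combination (norm := module) (2 : ℝ) • key

theorem inner_ne_zero_of_sym (hSym : S.Sym)
    (hf : f ∈ Set.extremePoints ℝ {g : StrongDual ℝ X | S.dualNormQ g ≤ 1})
    {ω ν : H} (hω : ω ∈ S.A) (hν : ‖ν‖ = 1) (hQω : S.Q ω = f) (hQν : S.Q ν = f) :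
    inner 𝕜 ω ν ≠ 0 := by
  intro h0
  have hνA : ν ∈ S.A := ⟨hν, by rw [hQν, ← hQω]; exact hω.2⟩
  obtain ⟨c, hc, hne⟩ := hSym ω hω ν hνA (hQω.trans hQν.symm)
  apply hne
  rw [Q'_eq_of_mem_extremePoints hf hω.1 (by rw [norm_smul, hc, hν, one_mul]) hQω
    ((S.Q_smul_of_norm_eq_one hc ν).trans hQν), inner_smul_right, h0]
  simp

theorem exists_orthogonal_of_inner_eq_ofReal
    (hf : f ∈ Set.extremePoints ℝ {g : StrongDual ℝ X | S.dualNormQ g ≤ 1})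
    {ω ν : H} (hω : ‖ω‖ = 1) (hν : ‖ν‖ = 1) (hQω : S.Q ω = f) (hQν : S.Q ν = f)
    {r : ℝ} (hr : inner 𝕜 ω ν = r) (hr1 : |r| < 1) :
    ∃ η : H, ‖η‖ = 1 ∧ S.Q η = f ∧ inner 𝕜 ω η = 0 := by
  set δ := ν - (r : 𝕜) • ω
  have hν_eq : (r : 𝕜) • ω + δ = ν := add_sub_cancel _ _
  have hωδ : inner 𝕜 ω δ = 0 := by
    rw [inner_sub_right, inner_smul_right, hr, inner_self_eq_norm_sq_to_K, hω]
    simp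
  have hQ'δ : S.Q' ω δ = 0 := by
    rw [S.Q'_sub_right, S.Q'_ofReal_smul_right, S.Q'_self,
      Q'_eq_of_mem_extremePoints hf hω hν hQω hQν, hr, RCLike.ofReal_re, hQω]
    module
  have hδ : ‖δ‖ ^ 2 = 1 - r ^ 2 := by
    have := norm_add_sq_eq_norm_sq_add_norm_sq_of_inner_eq_zero ((r : 𝕜) • ω) δ
      (by rw [inner_smul_left, hωδ, mul_zero])
    rw [hν_eq, hν, norm_smul, RCLike.norm_ofReal, hω] at this
    nlinarith [sq_abs r]
  have hQδ : S.Q δ = ‖δ‖ ^ 2 • f := by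
    have := S.Q_add ((r : 𝕜) • ω) δ
    rw [hν_eq, S.Q'_ofReal_smul_left, hQ'δ, S.Q_smul, hQν, hQω, RCLike.norm_ofReal, sq_abs] at this
    rw [hδ]
    linear_combination (norm := module) -this
  have hδ0 : δ ≠ 0 := by
    rintro h0
    rw [h0, norm_zero] at hδ
    nlinarith [sq_abs r, abs_nonneg r]
  refine ⟨(‖δ‖⁻¹ : 𝕜) • δ, norm_smul_inv_norm hδ0, ?_, ?_⟩
  · rw [S.Q_smul, hQδ, smul_smul, norm_inv, RCLike.norm_ofReal, abs_norm, inv_pow,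
      inv_mul_cancel₀ (by positivity), one_smul]
  · rw [inner_smul_right, hωδ, mul_zero]

theorem exists_orthogonal_of_norm_inner_lt_one
    (hf : f ∈ Set.extremePoints ℝ {g : StrongDual ℝ X | S.dualNormQ g ≤ 1})
    {ω ν : H} (hω : ‖ω‖ = 1) (hν : ‖ν‖ = 1) (hQω : S.Q ω = f) (hQν : S.Q ν = f)
    (h : ‖inner 𝕜 ω ν‖ < 1) :
    ∃ η : H, ‖η‖ = 1 ∧ S.Q η = f ∧ inner 𝕜 ω η = 0 := by
  obtain ⟨u, hu, hinner⟩ := exists_norm_eq_one_inner_smul_eq_norm (𝕜 := 𝕜) ω ν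
  exact exists_orthogonal_of_inner_eq_ofReal hf hω (by rw [norm_smul, hu, hν, one_mul]) hQω
    ((S.Q_smul_of_norm_eq_one hu ν).trans hQν) hinner (by rwa [abs_norm])

theorem norm_inner_eq_one_of_sym (hSym : S.Sym)
    (hf : f ∈ Set.extremePoints ℝ {g : StrongDual ℝ X | S.dualNormQ g ≤ 1})
    {ω ν : H} (hω : ω ∈ S.A) (hν : ‖ν‖ = 1) (hQω : S.Q ω = f) (hQν : S.Q ν = f) :
    ‖inner 𝕜 ω ν‖ = 1 := by
  refine le_antisymm ?_ (not_lt.1 fun h => ?_)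
  · simpa [hω.1, hν] using norm_inner_le_norm (𝕜 := 𝕜) ω ν
  obtain ⟨η, hη, hQη, hωη⟩ := exists_orthogonal_of_norm_inner_lt_one hf hω.1 hν hQω hQν h
  exact inner_ne_zero_of_sym hSym hf hω hη hQω hQη hωη

end CLMS

theorem stmt_13_general {𝕜 X H : Type*} [RCLike 𝕜]
    [NormedAddCommGroup X] [NormedSpace ℝ X] [CompleteSpace X]
    [NormedAddCommGroup H] [InnerProductSpace 𝕜 H] [CompleteSpace H]
    (S : CLMS 𝕜 X H) (hSym : S.Sym) (f : StrongDual ℝ X)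
    (hf : f ∈ Set.extremePoints ℝ {g : StrongDual ℝ X | S.dualNormQ g ≤ 1})
    (ω γ : H) (hω : ω ∈ S.A) (hγ : γ ∈ S.A)
    (hQω : S.Q ω = f) (hQγ : S.Q γ = f) :
    ∃ c : 𝕜, ‖c‖ = 1 ∧ γ = c • ω := by
  have h := S.norm_inner_eq_one_of_sym hSym hf hω hγ.1 hQω hQγ
  obtain ⟨c, -, rfl⟩ := (norm_inner_eq_norm_iff (norm_ne_zero_iff.1 (hω.1 ▸ one_ne_zero))
    (norm_ne_zero_iff.1 (hγ.1 ▸ one_ne_zero))).1 (by rw [h, hω.1, hγ.1, one_mul])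
  refine ⟨c, ?_, rfl⟩
  simpa [norm_smul, hω.1] using hγ.1

/-- under (Sym), for `f` an extreme point of the `X_Q*`-unit ball,
minimum norm solutions of `Qω = f` are unique up to a unimodular scalar. -/
theorem stmt_13 {𝕜 X H : Type*} [RCLike 𝕜]
    [NormedAddCommGroup X] [NormedSpace ℝ X] [CompleteSpace X]
    [TopologicalSpace.SeparableSpace (StrongDual ℝ X)]
    [NormedAddCommGroup H] [InnerProductSpace 𝕜 H] [CompleteSpace H]
    (S : CLMS 𝕜 X H) (hSym : S.Sym) (f : StrongDual ℝ X)
    (hf : f ∈ Set.extremePoints ℝ {g : StrongDual ℝ X | S.dualNormQ g ≤ 1})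
    (ω γ : H) (hω : ω ∈ S.A) (hγ : γ ∈ S.A)
    (hQω : S.Q ω = f) (hQγ : S.Q γ = f) :
    ∃ c : 𝕜, ‖c‖ = 1 ∧ γ = c • ω :=
  stmt_13_general S hSym f hf ω γ hω hγ hQω hQγ
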